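/- Let B_1, …, B_Q be uniformly intersecting dependences, i.e., B_i(x) = A x + b_i all share the same linear part A, and let FP(τ) = ⋃_{i=1}^{Q} B_i⟨T(τ)⟩ be the combined footprint of tile τ. Then for all τ, δ ∈ ℤ^t, FP(τ+δ) = (A(δ_1·𝐧_1 + … + δ_t·𝐧_t)) +ᵥ FP(τ); moreover, if t = d, T(τ) is nonempty, and each A(𝐧_j) has integer coordinates, then the set {A(Σ_j δ_j 𝐧_j) : δ ∈ ℤ^d and FP(τ+δ) ∩ FP(τ) ≠ ∅} is finite. -/

import Mathlib

open RealInnerProductSpace Pointwise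

/-!
Since `⟪𝐧ᵢ, nⱼ⟫ = sⱼ δᵢⱼ`, translating by `v = ∑ δⱼ 𝐧ⱼ` shifts every `⟪x, nⱼ⟫` by `δⱼ sⱼ`, so it
maps `T τ` onto `T (τ + δ)`; the affine maps `x ↦ A x + bᵢ` turn this into the translation of
the footprint by `A v`. If `FP (τ + δ)` meets `FP τ`, then `A v` lies in the difference set
`FP τ - FP τ`. When `t = d` the `nⱼ` form a basis, so the tile, hence `FP τ - FP τ`, is bounded,
while `A v` has integer coordinates; a bounded set holds only finitely many integer points.
-/

open Bornology Set

section Tile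

variable {E : Type*} [NormedAddCommGroup E] [InnerProductSpace ℝ E] {ι : Type*}

def tile (n : ι → E) (s : ι → ℝ) (τ : ι → ℤ) : Set E :=
  {x | ∀ j, s j * (τ j : ℝ) ≤ ⟪x, n j⟫ ∧ ⟪x, n j⟫ < s j * ((τ j : ℝ) + 1)}

variable [Fintype ι]

lemma inner_sum_smul_of_inner_eq_ite [DecidableEq ι] {n N : ι → E} {s : ι → ℝ}
    (hN : ∀ i j, ⟪N i, n j⟫ = if i = j then s j else 0) (c : ι → ℝ) (j : ι) :
    ⟪∑ i, c i • N i, n j⟫ = c j * s j := by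
  simp [sum_inner, real_inner_smul_left, hN]

lemma tile_add [DecidableEq ι] {n N : ι → E} {s : ι → ℝ}
    (hN : ∀ i j, ⟪N i, n j⟫ = if i = j then s j else 0) (τ δ : ι → ℤ) :
    tile n s (τ + δ) = (∑ j, (δ j : ℝ) • N j) +ᵥ tile n s τ := by
  ext x
  simp only [tile, mem_vadd_set_iff_neg_vadd_mem, mem_ofPred_eq, vadd_eq_add, inner_add_left,
    inner_neg_left, inner_sum_smul_of_inner_eq_ite hN, Pi.add_apply, Int.cast_add]
  refine forall_congr' fun j => and_congr ?_ ?_ <;> constructor <;> intro h <;> linarith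

lemma isBounded_setOf_inner_mem_Icc [FiniteDimensional ℝ E] (b : Module.Basis ι ℝ E)
    (lo hi : ι → ℝ) : IsBounded {x : E | ∀ j, ⟪x, b j⟫ ∈ Icc (lo j) (hi j)} := by
  let L : E →ₗ[ℝ] ι → ℝ := LinearMap.pi fun j => (innerₛₗ ℝ).flip (b j)
  have hL : Function.Injective L := fun x y hxy =>
    InnerProductSpace.ext_inner_right_basis b fun j => congr_fun hxy j
  obtain ⟨K, -, hK⟩ := L.injective_iff_antilipschitz.mp hL
  exact (hK.isBounded_preimage (Metric.isBounded_Icc lo hi)).subset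
    fun x hx => ⟨fun j => (hx j).1, fun j => (hx j).2⟩

lemma isBounded_tile [FiniteDimensional ℝ E] {n : ι → E} (hn : LinearIndependent ℝ n)
    (hcard : Fintype.card ι = Module.finrank ℝ E) (s : ι → ℝ) (τ : ι → ℤ) :
    IsBounded (tile n s τ) := by
  have h := isBounded_setOf_inner_mem_Icc (basisOfLinearIndependentOfCardEqFinrank' n hn hcard)
    (fun j => s j * τ j) (fun j => s j * (τ j + 1))
  rw [coe_basisOfLinearIndependentOfCardEqFinrank'] at h
  exact h.subset fun x hx j => ⟨(hx j).1, (hx j).2.le⟩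

end Tile

section Footprint

variable {R E F κ : Type*} [Semiring R] [AddCommMonoid E] [AddCommMonoid F] [Module R E]
  [Module R F]

def footprint (A : E →ₗ[R] F) (b : κ → F) (S : Set E) : Set F :=
  ⋃ i, (fun x => A x + b i) '' S

lemma footprint_vadd (A : E →ₗ[R] F) (b : κ → F) (v : E) (S : Set E) :
    footprint A b (v +ᵥ S) = A v +ᵥ footprint A b S := by
  simp only [footprint, image_iUnion, ← image_vadd, image_image, vadd_eq_add, map_add, add_assoc]

end Footprint

lemma isBounded_footprint {E F κ : Type*} [NormedAddCommGroup E] [NormedSpace ℝ E]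
    [FiniteDimensional ℝ E] [SeminormedAddCommGroup F] [NormedSpace ℝ F] [Finite κ]
    (A : E →ₗ[ℝ] F) (b : κ → F) {S : Set E} (hS : IsBounded S) :
    IsBounded (footprint A b S) := by
  refine isBounded_iUnion.mpr fun i => ?_
  rw [← image_image (· + b i), ← add_singleton]
  exact isBounded_add ((LinearMap.toContinuousLinearMap A).lipschitz.isBounded_image hS)
    isBounded_singleton

lemma mem_sub_of_vadd_inter_nonempty {G : Type*} [AddGroup G] {v : G} {S : Set G}
    (h : ((v +ᵥ S) ∩ S).Nonempty) : v ∈ S - S := by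
  obtain ⟨a, b, ⟨ha, hb⟩, rfl⟩ := vadd_inter_nonempty_iff'.mp h
  exact sub_mem_sub ha hb

lemma finite_isBounded_inter_intCoords {κ : Type*} [Fintype κ]
    {S : Set (EuclideanSpace ℝ κ)} (hS : IsBounded S) :
    {w ∈ S | ∀ l, ∃ z : ℤ, w l = z}.Finite := by
  obtain ⟨C, hC⟩ := isBounded_iff_forall_norm_le.mp hS
  have hbox : (pi univ fun _ : κ => Icc (-⌈C⌉) ⌈C⌉).Finite :=
    Finite.pi fun _ => finite_Icc _ _
  refine (hbox.image fun z => WithLp.toLp 2 fun l => (z l : ℝ)).subset ?_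
  rintro w ⟨hw, hint⟩
  choose z hz using hint
  refine ⟨z, fun l _ => ?_, by ext l; simp [hz]⟩
  have hzC : |(z l : ℝ)| ≤ ⌈C⌉ :=
    (hz l ▸ (PiLp.norm_apply_le w l).trans (hC w hw)).trans (Int.le_ceil C)
  exact abs_le.mp (by exact_mod_cast hzC)

lemma exists_intCast_sum_smul_apply {ι κ : Type*} [Fintype ι] {v : ι → EuclideanSpace ℝ κ}
    (hv : ∀ j l, ∃ z : ℤ, v j l = z) (δ : ι → ℤ) (l : κ) :
    ∃ z : ℤ, (∑ j, (δ j : ℝ) • v j) l = z := by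
  choose z hz using hv
  exact ⟨∑ j, δ j * z j l, by simp [hz]⟩

theorem combined_footprint_translate_and_finite_general
    (d t k Q : ℕ)
    (n : Fin t → EuclideanSpace ℝ (Fin d)) (hn : LinearIndependent ℝ n)
    (s : Fin t → ℝ)
    (N : Fin t → EuclideanSpace ℝ (Fin d))
    (hN : ∀ i j, ⟪N i, n j⟫ = if i = j then s j else 0)
    (A : EuclideanSpace ℝ (Fin d) →ₗ[ℝ] EuclideanSpace ℝ (Fin k))
    (b : Fin Q → EuclideanSpace ℝ (Fin k))
    (T : (Fin t → ℤ) → Set (EuclideanSpace ℝ (Fin d)))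
    (hT : ∀ τ, T τ = {x | ∀ j, s j * (τ j : ℝ) ≤ ⟪x, n j⟫ ∧ ⟪x, n j⟫ < s j * ((τ j : ℝ) + 1)})
    (FP : (Fin t → ℤ) → Set (EuclideanSpace ℝ (Fin k)))
    (hFP : ∀ τ, FP τ = ⋃ i : Fin Q, (fun x => A x + b i) '' T τ) :
    (∀ τ δ : Fin t → ℤ, FP (τ + δ) = A (∑ j, (δ j : ℝ) • N j) +ᵥ FP τ) ∧
    (t = d → ∀ τ : Fin t → ℤ, (T τ).Nonempty →
      (∀ j l, ∃ z : ℤ, A (N j) l = (z : ℝ)) →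
      {w : EuclideanSpace ℝ (Fin k) | ∃ δ : Fin t → ℤ,
        w = A (∑ j, (δ j : ℝ) • N j) ∧ (FP (τ + δ) ∩ FP τ).Nonempty}.Finite) := by
  obtain rfl : T = tile n s := funext hT
  obtain rfl : FP = fun τ => footprint A b (tile n s τ) := funext hFP
  have htranslate (τ δ : Fin t → ℤ) : footprint A b (tile n s (τ + δ)) =
      A (∑ j, (δ j : ℝ) • N j) +ᵥ footprint A b (tile n s τ) := by
    rw [tile_add hN, footprint_vadd]
  refine ⟨htranslate, ?_⟩
  rintro rfl τ - hAN
  have hbdd : IsBounded (footprint A b (tile n s τ)) :=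
    isBounded_footprint A b (isBounded_tile hn (by simp) s τ)
  refine (finite_isBounded_inter_intCoords (isBounded_sub hbdd hbdd)).subset ?_
  rintro w ⟨δ, rfl, hδ⟩
  refine ⟨mem_sub_of_vadd_inter_nonempty (htranslate τ δ ▸ hδ), ?_⟩
  simpa only [map_sum, map_smul] using exists_intCast_sum_smul_apply hAN δ

/-- for uniformly intersecting dependences `B i x = A x + b i`, the combined
footprint `FP τ = ⋃ i, B i ⟨T τ⟩` translates as `FP (τ+δ) = A (∑ j, δ j • 𝐧 j) +ᵥ FP τ`;
moreover if `t = d`, `T τ` is nonempty and each `A (𝐧 j)` has integer coordinates, only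
finitely many translation vectors give overlapping combined footprints. -/
theorem combined_footprint_translate_and_finite
    (d t k Q : ℕ) (ht : t ≤ d)
    (n : Fin t → EuclideanSpace ℝ (Fin d)) (hn : LinearIndependent ℝ n)
    (s : Fin t → ℝ) (hs : ∀ j, 0 < s j)
    (N : Fin t → EuclideanSpace ℝ (Fin d))
    (hN : ∀ i j, ⟪N i, n j⟫ = if i = j then s j else 0)
    (A : EuclideanSpace ℝ (Fin d) →ₗ[ℝ] EuclideanSpace ℝ (Fin k))
    (b : Fin Q → EuclideanSpace ℝ (Fin k))
    (T : (Fin t → ℤ) → Set (EuclideanSpace ℝ (Fin d)))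
    (hT : ∀ τ, T τ = {x | ∀ j, s j * (τ j : ℝ) ≤ ⟪x, n j⟫ ∧ ⟪x, n j⟫ < s j * ((τ j : ℝ) + 1)})
    (FP : (Fin t → ℤ) → Set (EuclideanSpace ℝ (Fin k)))
    (hFP : ∀ τ, FP τ = ⋃ i : Fin Q, (fun x => A x + b i) '' T τ) :
    (∀ τ δ : Fin t → ℤ, FP (τ + δ) = A (∑ j, (δ j : ℝ) • N j) +ᵥ FP τ) ∧
    (t = d → ∀ τ : Fin t → ℤ, (T τ).Nonempty →
      (∀ j l, ∃ z : ℤ, A (N j) l = (z : ℝ)) →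
      {w : EuclideanSpace ℝ (Fin k) | ∃ δ : Fin t → ℤ,
        w = A (∑ j, (δ j : ℝ) • N j) ∧ (FP (τ + δ) ∩ FP τ).Nonempty}.Finite) :=
  combined_footprint_translate_and_finite_general d t k Q n hn s N hN A b T hT FP hFP
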